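/- arXiv:2210.13122 — 3 statements merged into one kernel-verified Lean document; each statement's English description precedes it below -/
import Mathlib

section
/- Let m be an even natural number, so D_m = 3. Then the system a₀ = a₀³ + 2·D_m·a₁²·a₀, a₁ = D_m·a₁·a₀² + 3·a₁³ with a₀ > 0, a₁ > 0 has the unique solution a₀ = 1/√5, a₁ = 2/(√5·√12), i.e. a₀² = 1/5 and a₁² = 2/15. -/
/-- For even `m` (so `D_m = 2 + (-1)^m = 3`), the positive solutions of the
`N = 1` matching system are exactly characterised by `a₀² = 1/5`, `a₁² = 2/15`,
i.e. `a₀ = 1/√5` and `a₁ = √(2/15)` is the unique positive solution. -/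
theorem stmt_2 (m : ℕ) (hm : Even m) :
    ∀ a₀ a₁ : ℝ, 0 < a₀ → 0 < a₁ →
      ((a₀ = a₀ ^ 3 + 2 * (2 + (-1 : ℝ) ^ m) * a₁ ^ 2 * a₀ ∧
        a₁ = (2 + (-1 : ℝ) ^ m) * a₁ * a₀ ^ 2 + 3 * a₁ ^ 3)
        ↔ (a₀ ^ 2 = 1 / 5 ∧ a₁ ^ 2 = 2 / 15)) := by
  intro a₀ a₁ h₀ h₁
  rw [hm.neg_one_pow]
  constructor
  · rintro ⟨e1, e2⟩
    have k1 : a₀ ^ 2 + 6 * a₁ ^ 2 = 1 := by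
      have := mul_left_cancel₀ (ne_of_gt h₀) (a := a₀) (b := 1)
        (c := a₀ ^ 2 + 6 * a₁ ^ 2) ?_
      · linarith
      · ring_nf; nlinarith [e1]
    have k2 : 3 * a₀ ^ 2 + 3 * a₁ ^ 2 = 1 := by
      have := mul_left_cancel₀ (ne_of_gt h₁) (a := a₁) (b := 1)
        (c := 3 * a₀ ^ 2 + 3 * a₁ ^ 2) ?_
      · linarith
      · ring_nf; nlinarith [e2]
    constructor <;> linarith
  · rintro ⟨e1, e2⟩
    constructor <;> nlinarith [e1, e2]
end

section
/- Define the map R on (N+1)-tuples of reals by (R a)_n = (-1)^n a_n. If a = (a₀,...,a_N) satisfies the matching equation a_n = Σ_{i+j+k=n, |i|,|j|,|k| ≤ N} (-1)^{m(|i|+|j|-|k|-n)/2} a_{|i|} a_{|j|} a_{|k|} for all n ∈ [0,N], then R a also satisfies the matching equation. -/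
/-- The cubic matching map `C^m_N`: component `n` is
`∑_{i+j+k=n, -N ≤ i,j,k ≤ N} (-1)^{m(|i|+|j|-|k|-n)/2} a_{|i|} a_{|j|} a_{|k|}`. -/
noncomputable def cubicMatchSeq (m N : ℕ) (a : ℕ → ℝ) (n : ℤ) : ℝ :=
  ∑ p ∈ (Finset.Icc (-(N : ℤ)) (N : ℤ) ×ˢ Finset.Icc (-(N : ℤ)) (N : ℤ) ×ˢ
      Finset.Icc (-(N : ℤ)) (N : ℤ)).filter (fun p => p.1 + p.2.1 + p.2.2 = n),
    (-1 : ℝ) ^ (((m : ℤ) * (|p.1| + |p.2.1| - |p.2.2| - n)) / 2) *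
      a p.1.natAbs * a p.2.1.natAbs * a p.2.2.natAbs

lemma parity_aux (i j k : ℤ) (n : ℕ) (h : i + j + k = (n : ℤ)) :
    (-1 : ℝ) ^ i.natAbs * (-1 : ℝ) ^ j.natAbs * (-1 : ℝ) ^ k.natAbs = (-1 : ℝ) ^ n := by
  rw [← pow_add, ← pow_add]
  have h2 : (i.natAbs + j.natAbs + k.natAbs) % 2 = n % 2 := by omega
  rw [neg_one_pow_eq_pow_mod_two, h2, ← neg_one_pow_eq_pow_mod_two]

/-- If `a` solves the matching equation `a = C^m_N(a)`, then so does
`(R a)_n = (-1)^n a_n`. -/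
theorem stmt_5 (m N : ℕ) (a : ℕ → ℝ)
    (ha : ∀ n : ℕ, n ≤ N → a n = cubicMatchSeq m N a (n : ℤ)) :
    ∀ n : ℕ, n ≤ N →
      (-1 : ℝ) ^ n * a n = cubicMatchSeq m N (fun k => (-1 : ℝ) ^ k * a k) (n : ℤ) := by
  intro n hn
  rw [ha n hn, cubicMatchSeq, cubicMatchSeq, Finset.mul_sum]
  apply Finset.sum_congr rfl
  intro p hp
  simp only [Finset.mem_filter] at hp
  have hpar := parity_aux p.1 p.2.1 p.2.2 n hp.2
  linear_combination -((-1 : ℝ) ^ (((m : ℤ) * (|p.1| + |p.2.1| - |p.2.2| - (n : ℤ))) / 2) *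
    a p.1.natAbs * a p.2.1.natAbs * a p.2.2.natAbs) * hpar
end

section
/- (Symmetry of the Jacobian of the cubic matching map) For every a ∈ ℝ^{N+1} and all ℓ, n ∈ {1,...,N}, the partial derivatives of the cubic matching map satisfy ∂_ℓ [C^m_N(a)]_n = ∂_n [C^m_N(a)]_ℓ, and for all n ∈ {1,...,N}, ∂_n [C^m_N(a)]_0 = 2·∂_0 [C^m_N(a)]_n. -/
/-!
Differentiating `a_{|i|} a_{|j|} a_{|k|}` in the direction `e_l` picks out the triples with `l`
among `|i|, |j|, |k|`. The first two slots play symmetric roles, so `∂_l C_n` is a sum, over the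
signed indices `x = ±l`, of twice a first-slot sum and a third-slot sum. For a fixed sign `s`,
the reflections `(s l, j, k) ↦ (s n, -s k, -s j)` and `(i, j, s l) ↦ (-s i, -s j, s n)` match
the triples of `∂_l C_n` with those of `∂_n C_l`. The first negates the exponent
`e = |i| + |j| - |k| - n` and the second preserves it; as `i + j + k = n`, `e` is even, so the
sign `(-1)^(m e / 2)` is the same for `e` and `-e` despite the integer division. For `l = 0`
the two signs collapse to the single index `0`, whence the factor `2`.
-/
/-- Index map sending an integer `i` with `|i| ≤ N` to `|i| : Fin (N+1)`. -/
def matchIdx (N : ℕ) (i : ℤ) : Fin (N + 1) := ⟨min i.natAbs N, by omega⟩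

/-- The cubic matching map `C^m_N : ℝ^{N+1} → ℝ^{N+1}`: component `n` is
`∑_{i+j+k=n, -N ≤ i,j,k ≤ N} (-1)^{m(|i|+|j|-|k|-n)/2} a_{|i|} a_{|j|} a_{|k|}`. -/
noncomputable def cubicMatchF (m N : ℕ) (a : Fin (N + 1) → ℝ) : Fin (N + 1) → ℝ :=
  fun n =>
  ∑ p ∈ (Finset.Icc (-(N : ℤ)) (N : ℤ) ×ˢ Finset.Icc (-(N : ℤ)) (N : ℤ) ×ˢ
      Finset.Icc (-(N : ℤ)) (N : ℤ)).filter (fun p => p.1 + p.2.1 + p.2.2 = (n : ℤ)),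
    (-1 : ℝ) ^ (((m : ℤ) * (|p.1| + |p.2.1| - |p.2.2| - (n : ℤ))) / 2) *
      a (matchIdx N p.1) * a (matchIdx N p.2.1) * a (matchIdx N p.2.2)

namespace CubicMatch

open Finset

noncomputable def triples (N : ℕ) (y : ℤ) : Finset (ℤ × ℤ × ℤ) :=
  (Icc (-(N : ℤ)) N ×ˢ Icc (-(N : ℤ)) N ×ˢ Icc (-(N : ℤ)) N).filter
    (fun p => p.1 + p.2.1 + p.2.2 = y)

theorem mem_triples {N : ℕ} {y : ℤ} {p : ℤ × ℤ × ℤ} :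
    p ∈ triples N y ↔ (-N ≤ p.1 ∧ p.1 ≤ N) ∧ (-N ≤ p.2.1 ∧ p.2.1 ≤ N) ∧
      (-N ≤ p.2.2 ∧ p.2.2 ≤ N) ∧ p.1 + p.2.1 + p.2.2 = y := by
  simp only [triples, mem_filter, mem_product, mem_Icc, and_assoc]

theorem sum_triples_comm {M : Type*} [AddCommMonoid M] (N : ℕ) (y : ℤ) (f : ℤ × ℤ × ℤ → M) :
    ∑ p ∈ triples N y, f (p.2.1, p.1, p.2.2) = ∑ p ∈ triples N y, f p := by
  refine sum_nbij' (fun p => (p.2.1, p.1, p.2.2)) (fun p => (p.2.1, p.1, p.2.2)) ?_ ?_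
    (fun _ _ => rfl) (fun _ _ => rfl) (fun _ _ => rfl) <;>
  · intro p hp
    simp only [mem_triples] at hp ⊢
    omega

theorem matchIdx_neg (N : ℕ) (i : ℤ) : matchIdx N (-i) = matchIdx N i := by
  simp [matchIdx]

theorem matchIdx_eq_iff {N : ℕ} {i : ℤ} (hi : -N ≤ i ∧ i ≤ N) (l : Fin (N + 1)) :
    matchIdx N i = l ↔ i = l ∨ i = -l := by
  have := l.is_le
  simp only [Fin.ext_iff, matchIdx]
  omega

theorem coe_ne_neg_coe {N : ℕ} {l : Fin (N + 1)} (hl : l ≠ 0) : (l : ℤ) ≠ -l := by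
  have := Fin.pos_iff_ne_zero.2 hl
  omega

def matchExponent (p : ℤ × ℤ × ℤ) (y : ℤ) : ℤ := |p.1| + |p.2.1| - |p.2.2| - y

noncomputable def matchSign (m : ℕ) (p : ℤ × ℤ × ℤ) (y : ℤ) : ℝ :=
  (-1) ^ ((m : ℤ) * matchExponent p y / 2)

theorem even_matchExponent {N : ℕ} {y : ℤ} {p : ℤ × ℤ × ℤ} (hp : p ∈ triples N y) :
    Even (matchExponent p y) := by
  rw [mem_triples] at hp
  have := abs_choice p.1
  have := abs_choice p.2.1
  have := abs_choice p.2.2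
  rw [Int.even_iff, matchExponent]
  omega

theorem neg_one_zpow_mul_neg_div_two {α : Type*} [DivisionMonoid α] [HasDistribNeg α] (m : ℤ)
    {e : ℤ} (he : Even e) : (-1 : α) ^ (m * -e / 2) = (-1) ^ (m * e / 2) := by
  obtain ⟨k, rfl⟩ := he
  have hdiv (c : ℤ) : c * 2 / 2 = c := Int.mul_ediv_cancel c two_ne_zero
  rw [show m * -(k + k) = -(m * k) * 2 by ring, show m * (k + k) = m * k * 2 by ring, hdiv, hdiv,
    neg_one_zpow_eq_ite, neg_one_zpow_eq_ite]
  simp only [even_neg]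

theorem matchSign_eq_of_matchExponent_eq_neg (m : ℕ) {p q : ℤ × ℤ × ℤ} {y z : ℤ}
    (hp : Even (matchExponent p y)) (h : matchExponent q z = -matchExponent p y) :
    matchSign m q z = matchSign m p y := by
  rw [matchSign, h, neg_one_zpow_mul_neg_div_two _ hp, matchSign]

theorem matchSign_swap (m : ℕ) (p : ℤ × ℤ × ℤ) (y : ℤ) :
    matchSign m (p.2.1, p.1, p.2.2) y = matchSign m p y := by
  rw [matchSign, matchSign, matchExponent, matchExponent, add_comm |p.2.1|]

section Jacobian

variable (m N : ℕ) (a : Fin (N + 1) → ℝ)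

theorem fderiv_cubicMatchF_apply (v : Fin (N + 1) → ℝ) (n : Fin (N + 1)) :
    fderiv ℝ (cubicMatchF m N) a v n = ∑ p ∈ triples N n, matchSign m p n *
      (2 * v (matchIdx N p.1) * a (matchIdx N p.2.1) * a (matchIdx N p.2.2)
        + a (matchIdx N p.1) * a (matchIdx N p.2.1) * v (matchIdx N p.2.2)) := by
  have hcomp : ∀ n : Fin (N + 1), HasFDerivAt (fun a : Fin (N + 1) → ℝ => ∑ p ∈ triples N n,
      matchSign m p n * a (matchIdx N p.1) * a (matchIdx N p.2.1) * a (matchIdx N p.2.2)) _ a :=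
    fun n => HasFDerivAt.fun_sum fun p _ =>
      (((hasFDerivAt_apply (𝕜 := ℝ) (matchIdx N p.1) a).const_mul (matchSign m p n)).mul
        (hasFDerivAt_apply (𝕜 := ℝ) (matchIdx N p.2.1) a)).mul
        (hasFDerivAt_apply (𝕜 := ℝ) (matchIdx N p.2.2) a)
  rw [HasFDerivAt.fderiv (f := cubicMatchF m N) (hasFDerivAt_pi.2 hcomp)]
  simp only [ContinuousLinearMap.coe_pi', _root_.sum_apply, add_apply, smul_apply, Pi.mul_apply,
    ContinuousLinearMap.proj_apply, smul_eq_mul]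
  have hswap := sum_triples_comm N n fun p =>
    matchSign m p n * (v (matchIdx N p.1) * a (matchIdx N p.2.1) * a (matchIdx N p.2.2))
  simp only [matchSign_swap] at hswap
  calc _ = ∑ p ∈ triples N n,
          matchSign m p n * (v (matchIdx N p.2.1) * a (matchIdx N p.1) * a (matchIdx N p.2.2))
        + ∑ p ∈ triples N n, matchSign m p n *
          (v (matchIdx N p.1) * a (matchIdx N p.2.1) * a (matchIdx N p.2.2)
            + a (matchIdx N p.1) * a (matchIdx N p.2.1) * v (matchIdx N p.2.2)) := by
        rw [← sum_add_distrib]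
        exact sum_congr rfl fun p _ => by ring
    _ = _ := by
        rw [hswap, ← sum_add_distrib]
        exact sum_congr rfl fun p _ => by ring

noncomputable def sliceFst (x y : ℤ) : ℝ :=
  ∑ p ∈ (triples N y).filter (·.1 = x),
    matchSign m p y * (a (matchIdx N p.2.1) * a (matchIdx N p.2.2))

noncomputable def sliceThd (x y : ℤ) : ℝ :=
  ∑ p ∈ (triples N y).filter (·.2.2 = x),
    matchSign m p y * (a (matchIdx N p.1) * a (matchIdx N p.2.1))

noncomputable def signedPartial (x y : ℤ) : ℝ :=
  2 * sliceFst m N a x y + sliceThd m N a x y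

theorem fderiv_cubicMatchF_single (l n : Fin (N + 1)) :
    fderiv ℝ (cubicMatchF m N) a (Pi.single l 1) n =
      ∑ x ∈ ({(l : ℤ), -(l : ℤ)} : Finset ℤ), signedPartial m N a x n := by
  simp only [fderiv_cubicMatchF_apply, signedPartial, sliceFst, sliceThd, sum_filter, mul_sum,
    sum_add_distrib]
  rw [sum_comm (t := triples N n), sum_comm (t := triples N n), ← sum_add_distrib]
  refine sum_congr rfl fun p hp => ?_
  rw [mem_triples] at hp
  simp only [Pi.single_apply, matchIdx_eq_iff hp.1, matchIdx_eq_iff hp.2.2.1, mul_ite, mul_zero,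
    sum_ite_eq, mem_insert, mem_singleton]
  split_ifs <;> ring

variable {m N a}

theorem sliceFst_swap {s : ℤ} (hs : s = 1 ∨ s = -1) (x y : Fin (N + 1)) :
    sliceFst m N a (s * x) y = sliceFst m N a (s * y) x := by
  have hx := x.is_le
  have hy := y.is_le
  refine sum_nbij' (fun p => (s * y, -(s * p.2.2), -(s * p.2.1)))
    (fun p => (s * x, -(s * p.2.2), -(s * p.2.1))) ?_ ?_ ?_ ?_ ?_
  iterate 4
    · intro p hp
      simp only [mem_filter, mem_triples, Prod.ext_iff, and_true] at hp ⊢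
      rcases hs with rfl | rfl <;> omega
  intro p hp
  rw [mem_filter] at hp
  have hexp : matchExponent (s * y, -(s * p.2.2), -(s * p.2.1)) x = -matchExponent p y := by
    rcases hs with rfl | rfl <;>
      simp only [matchExponent, hp.2, one_mul, neg_one_mul, neg_neg, abs_neg, Nat.abs_cast] <;>
      ring
  rw [matchSign_eq_of_matchExponent_eq_neg m (even_matchExponent hp.1) hexp]
  rcases hs with rfl | rfl <;> simp only [one_mul, neg_one_mul, neg_neg, matchIdx_neg] <;> ring

theorem sliceThd_swap {s : ℤ} (hs : s = 1 ∨ s = -1) (x y : Fin (N + 1)) :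
    sliceThd m N a (s * x) y = sliceThd m N a (s * y) x := by
  have hx := x.is_le
  have hy := y.is_le
  refine sum_nbij' (fun p => (-(s * p.1), -(s * p.2.1), s * y))
    (fun p => (-(s * p.1), -(s * p.2.1), s * x)) ?_ ?_ ?_ ?_ ?_
  iterate 4
    · intro p hp
      simp only [mem_filter, mem_triples, Prod.ext_iff, and_true] at hp ⊢
      rcases hs with rfl | rfl <;> omega
  intro p hp
  rw [mem_filter] at hp
  have hexp : matchExponent (-(s * p.1), -(s * p.2.1), s * y) x = matchExponent p y := by
    rcases hs with rfl | rfl <;>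
      simp only [matchExponent, hp.2, one_mul, neg_one_mul, neg_neg, abs_neg, Nat.abs_cast] <;>
      ring
  simp only [matchSign, hexp]
  rcases hs with rfl | rfl <;> simp only [one_mul, neg_one_mul, neg_neg, matchIdx_neg]

theorem signedPartial_swap {s : ℤ} (hs : s = 1 ∨ s = -1) (x y : Fin (N + 1)) :
    signedPartial m N a (s * x) y = signedPartial m N a (s * y) x := by
  rw [signedPartial, signedPartial, sliceFst_swap hs, sliceThd_swap hs]

end Jacobian

end CubicMatch

/-- Symmetry of the Jacobian of the cubic matching map:
`∂_ℓ [C^m_N(a)]_n = ∂_n [C^m_N(a)]_ℓ` for `ℓ, n ∈ {1,…,N}`, and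
`∂_n [C^m_N(a)]_0 = 2 ∂_0 [C^m_N(a)]_n` for `n ∈ {1,…,N}`. -/
theorem stmt_13 (m N : ℕ) (a : Fin (N + 1) → ℝ) :
    (∀ l n : Fin (N + 1), l ≠ 0 → n ≠ 0 →
      fderiv ℝ (cubicMatchF m N) a (Pi.single l 1) n
        = fderiv ℝ (cubicMatchF m N) a (Pi.single n 1) l) ∧
    (∀ n : Fin (N + 1), n ≠ 0 →
      fderiv ℝ (cubicMatchF m N) a (Pi.single n 1) 0
        = 2 * fderiv ℝ (cubicMatchF m N) a (Pi.single 0 1) n) := by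
  have hplus := CubicMatch.signedPartial_swap (m := m) (a := a) (s := 1) (.inl rfl)
  have hminus := CubicMatch.signedPartial_swap (m := m) (a := a) (s := -1) (.inr rfl)
  simp only [one_mul, neg_one_mul] at hplus hminus
  refine ⟨fun l n hl hn => ?_, fun n hn => ?_⟩
  · rw [CubicMatch.fderiv_cubicMatchF_single, CubicMatch.fderiv_cubicMatchF_single,
      Finset.sum_pair (CubicMatch.coe_ne_neg_coe hl),
      Finset.sum_pair (CubicMatch.coe_ne_neg_coe hn), hplus, hminus]
  · rw [CubicMatch.fderiv_cubicMatchF_single, CubicMatch.fderiv_cubicMatchF_single,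
      Finset.sum_pair (CubicMatch.coe_ne_neg_coe hn), hplus, hminus]
    simp [two_mul]
end
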